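/- For any almost periodic sequence f on ℤ, the mean value ⟨f⟩ = lim_{N→∞} (1/(2N+1)) ∑_{k=n₀-N}^{n₀+N} f(k) exists and is independent of the base point n₀ ∈ ℤ. -/

import Mathlib

open scoped UniformConvergence

def Translates (f : ℤ → ℂ) : Set (ℤ →ᵤ ℂ) :=
  {g | ∃ k : ℤ, g = UniformFun.ofFun (fun n => f (n + k))}

def AlmostPeriodicSeq (f : ℤ → ℂ) : Prop :=
  IsCompact (closure (Translates f))

/-!
Bohr's argument. Total boundedness of the translates gives relatively dense almost periods:
for every `ε > 0` there is `L` such that every window `[a - L, a]` contains an `ε`-almost period.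
Hence the sums of `f` over two windows of the same length `n` differ by at most `n ε + 2 M L`,
wherever the windows lie (`M` bounds `|f|`). Comparing windows of lengths `n` and `m` through the
double sum `∑_{i<n} ∑_{j<m} f (a + i + j)` shows that the window averages are Cauchy as the length
tends to infinity, uniformly in the position of the window, so they all converge to one limit.
-/

open Finset Filter Topology

variable {E : Type*}

section WindowSum

variable [AddCommMonoid E] (f : ℤ → E)

def windowSum (a : ℤ) (n : ℕ) : E :=
  ∑ i ∈ range n, f (a + i)

lemma sum_Icc_eq_windowSum (a b : ℤ) :
    ∑ k ∈ Icc a b, f k = windowSum f a (b + 1 - a).toNat := by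
  rw [Int.Icc_eq_finset_map, sum_map]
  rfl

lemma windowSum_add (a : ℤ) (m n : ℕ) :
    windowSum f a (m + n) = windowSum f a m + windowSum f (a + m) n := by
  simp only [windowSum, sum_range_add, Nat.cast_add, add_assoc]

lemma sum_windowSum_comm (a : ℤ) (m n : ℕ) :
    ∑ j ∈ range m, windowSum f (a + j) n = ∑ i ∈ range n, windowSum f (a + i) m := by
  simp only [windowSum]
  rw [sum_comm]
  simp only [add_right_comm]

end WindowSum

section Seminormed

variable [SeminormedAddCommGroup E]

lemma norm_card_nsmul_sub_sum_le {ι : Type*} (s : Finset ι) (x : E) (g : ι → E) {C : ℝ}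
    (h : ∀ i ∈ s, ‖x - g i‖ ≤ C) : ‖#s • x - ∑ i ∈ s, g i‖ ≤ #s * C := by
  rw [← sum_const, ← sum_sub_distrib]
  simpa using norm_sum_le_of_le s h

variable (f : ℤ → E)

def IsAlmostPeriod (ε : ℝ) (τ : ℤ) : Prop :=
  ∀ k, ‖f (k + τ) - f k‖ ≤ ε

def HasAlmostPeriodsWithin (ε : ℝ) (L : ℕ) : Prop :=
  ∀ a : ℤ, ∃ τ, a - L ≤ τ ∧ τ ≤ a ∧ IsAlmostPeriod f ε τ

def IsBohrAlmostPeriodic : Prop :=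
  ∀ ε > 0, ∃ L, HasAlmostPeriodsWithin f ε L

variable {f} {M ε : ℝ}

lemma norm_windowSum_le (hM : ∀ k, ‖f k‖ ≤ M) (a : ℤ) (n : ℕ) : ‖windowSum f a n‖ ≤ n * M := by
  simpa [windowSum] using norm_sum_le_of_le (range n) fun i _ => hM (a + i)

lemma norm_windowSum_add_sub_le (hM : ∀ k, ‖f k‖ ≤ M) (a : ℤ) (c n : ℕ) :
    ‖windowSum f (a + c) n - windowSum f a n‖ ≤ 2 * M * c := by
  -- split the window `[a, a + c + n)` at `a + c` and at `a + n`
  have h : windowSum f (a + c) n - windowSum f a n = windowSum f (a + n) c - windowSum f a c := by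
    rw [sub_eq_sub_iff_add_eq_add, add_comm, ← windowSum_add, add_comm c, windowSum_add,
      add_comm]
  calc ‖windowSum f (a + c) n - windowSum f a n‖
      ≤ ‖windowSum f (a + n) c‖ + ‖windowSum f a c‖ := h ▸ norm_sub_le _ _
    _ ≤ c * M + c * M := add_le_add (norm_windowSum_le hM _ _) (norm_windowSum_le hM _ _)
    _ = 2 * M * c := by ring

lemma IsAlmostPeriod.norm_windowSum_add_sub_le {τ : ℤ} (hτ : IsAlmostPeriod f ε τ)
    (a : ℤ) (n : ℕ) : ‖windowSum f (a + τ) n - windowSum f a n‖ ≤ n * ε := by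
  rw [windowSum, windowSum, ← sum_sub_distrib]
  simpa [add_right_comm] using norm_sum_le_of_le (range n) fun i _ => hτ (a + i)

namespace HasAlmostPeriodsWithin

variable {L : ℕ}

lemma norm_windowSum_sub_le (hL : HasAlmostPeriodsWithin f ε L) (hM : ∀ k, ‖f k‖ ≤ M)
    (a b : ℤ) (n : ℕ) : ‖windowSum f b n - windowSum f a n‖ ≤ n * ε + 2 * M * L := by
  obtain ⟨τ, hτL, hτ, hper⟩ := hL (b - a)
  obtain ⟨c, rfl⟩ : ∃ c : ℕ, b = a + τ + c := ⟨(b - a - τ).toNat, by omega⟩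
  have hcL : (c : ℝ) ≤ L := by exact_mod_cast (show c ≤ L by omega)
  have hM0 : 0 ≤ M := (norm_nonneg _).trans (hM 0)
  calc ‖windowSum f (a + τ + c) n - windowSum f a n‖
      ≤ ‖windowSum f (a + τ + c) n - windowSum f (a + τ) n‖
        + ‖windowSum f (a + τ) n - windowSum f a n‖ := norm_sub_le_norm_sub_add_norm_sub _ _ _
    _ ≤ 2 * M * c + n * ε :=
        add_le_add (norm_windowSum_add_sub_le hM _ _ _) (hper.norm_windowSum_add_sub_le _ _)
    _ ≤ n * ε + 2 * M * L := by nlinarith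

/-- Both `∑ j < m, windowSum f (a + j) n` and `∑ i < n, windowSum f (a + i) m` count every
`f (a + i + j)` once; the first is close to `m • windowSum f a n` because the windows are shifted
by less than `m`, the second to `n • windowSum f b m` by almost periodicity. -/
lemma norm_nsmul_windowSum_sub_le (hL : HasAlmostPeriodsWithin f ε L) (hM : ∀ k, ‖f k‖ ≤ M)
    (a b : ℤ) (m n : ℕ) :
    ‖m • windowSum f a n - n • windowSum f b m‖ ≤ m * (2 * M * m) + n * (m * ε + 2 * M * L) := by
  have hM0 : 0 ≤ M := (norm_nonneg _).trans (hM 0)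
  have h₁ : ‖m • windowSum f a n - ∑ j ∈ range m, windowSum f (a + j) n‖ ≤ m * (2 * M * m) := by
    simpa using norm_card_nsmul_sub_sum_le (range m) _ _ fun j hj => by
      rw [norm_sub_rev]
      refine (norm_windowSum_add_sub_le hM a j n).trans ?_
      have : (j : ℝ) ≤ m := by exact_mod_cast (mem_range.1 hj).le
      nlinarith
  have h₂ : ‖∑ i ∈ range n, windowSum f (a + i) m - n • windowSum f b m‖
      ≤ n * (m * ε + 2 * M * L) := by
    rw [norm_sub_rev]
    simpa using norm_card_nsmul_sub_sum_le (range n) _ _ fun i _ =>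
      hL.norm_windowSum_sub_le hM (a + i) b m
  rw [sum_windowSum_comm] at h₁
  exact (norm_sub_le_norm_sub_add_norm_sub _ _ _).trans (add_le_add h₁ h₂)

end HasAlmostPeriodsWithin

lemma IsBohrAlmostPeriodic.exists_norm_le (hf : IsBohrAlmostPeriodic f) :
    ∃ M, ∀ k, ‖f k‖ ≤ M := by
  obtain ⟨L, hL⟩ := hf 1 one_pos
  refine ⟨∑ j ∈ Icc 0 (L : ℤ), ‖f j‖ + 1, fun k => ?_⟩
  obtain ⟨τ, hτL, hτ, hper⟩ := hL k
  have h₁ : ‖f (k - τ)‖ ≤ ∑ j ∈ Icc 0 (L : ℤ), ‖f j‖ :=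
    single_le_sum (fun j _ => norm_nonneg (f j)) (mem_Icc.2 ⟨by omega, by omega⟩)
  have h₂ := hper (k - τ)
  rw [sub_add_cancel] at h₂
  linarith [norm_sub_norm_le (f k) (f (k - τ))]

end Seminormed

section Average

variable [SeminormedAddCommGroup E] [NormedSpace ℝ E]

noncomputable def windowAvg (f : ℤ → E) (a : ℤ) (n : ℕ) : E :=
  (n : ℝ)⁻¹ • windowSum f a n

variable {f : ℤ → E}

lemma HasAlmostPeriodsWithin.norm_windowAvg_sub_le {ε M : ℝ} {L m n : ℕ}
    (hL : HasAlmostPeriodsWithin f ε L) (hM : ∀ k, ‖f k‖ ≤ M) (a b : ℤ)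
    (hm : 0 < m) (hn : 0 < n) :
    ‖windowAvg f a n - windowAvg f b m‖ ≤ ε + 2 * M * L / m + 2 * M * m / n := by
  have h : windowAvg f a n - windowAvg f b m
      = ((n : ℝ) * m)⁻¹ • (m • windowSum f a n - n • windowSum f b m) := by
    rw [windowAvg, windowAvg, ← Nat.cast_smul_eq_nsmul ℝ, ← Nat.cast_smul_eq_nsmul ℝ, smul_sub,
      smul_smul, smul_smul]
    congr 2 <;> field_simp
  rw [h, norm_smul, Real.norm_eq_abs, abs_of_pos (by positivity)]
  calc ((n : ℝ) * m)⁻¹ * ‖m • windowSum f a n - n • windowSum f b m‖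
      ≤ ((n : ℝ) * m)⁻¹ * (m * (2 * M * m) + n * (m * ε + 2 * M * L)) :=
        mul_le_mul_of_nonneg_left (hL.norm_nsmul_windowSum_sub_le hM a b m n) (by positivity)
    _ = ε + 2 * M * L / m + 2 * M * m / n := by field_simp; ring

namespace IsBohrAlmostPeriodic

lemma exists_forall_norm_windowAvg_sub_le (hf : IsBohrAlmostPeriodic f) {ε : ℝ} (hε : 0 < ε) :
    ∃ N : ℕ, ∀ n ≥ N, ∀ n' ≥ N, ∀ a b, ‖windowAvg f a n - windowAvg f b n'‖ ≤ ε := by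
  obtain ⟨M, hM⟩ := hf.exists_norm_le
  have hM0 : 0 ≤ M := (norm_nonneg _).trans (hM 0)
  obtain ⟨L, hL⟩ := hf (ε / 6) (by positivity)
  obtain ⟨m, hm⟩ := exists_nat_gt (2 * M * L / (ε / 6))
  have hm0 : (0 : ℝ) < m := lt_of_le_of_lt (by positivity) hm
  obtain ⟨N, hN⟩ := exists_nat_gt (2 * M * m / (ε / 6))
  have hclose : ∀ n ≥ N, ∀ a, ‖windowAvg f a n - windowAvg f 0 m‖ ≤ ε / 2 := by
    intro n hn a
    have hNn : (N : ℝ) ≤ n := by exact_mod_cast hn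
    have hn0 : (0 : ℝ) < n := (lt_of_le_of_lt (by positivity) hN).trans_le hNn
    have h₁ : 2 * M * L / m ≤ ε / 6 := by
      rw [div_lt_iff₀ (by positivity)] at hm
      rw [div_le_iff₀ hm0]
      linarith
    have h₂ : 2 * M * m / n ≤ ε / 6 := by
      rw [div_lt_iff₀ (by positivity)] at hN
      rw [div_le_iff₀ hn0]
      nlinarith
    linarith [hL.norm_windowAvg_sub_le hM a 0 (by exact_mod_cast hm0) (by exact_mod_cast hn0)]
  refine ⟨N, fun n hn n' hn' a b => ?_⟩
  calc ‖windowAvg f a n - windowAvg f b n'‖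
      ≤ ‖windowAvg f a n - windowAvg f 0 m‖ + ‖windowAvg f 0 m - windowAvg f b n'‖ :=
        norm_sub_le_norm_sub_add_norm_sub _ _ _
    _ ≤ ε / 2 + ε / 2 :=
        add_le_add (hclose n hn a) (norm_sub_rev (windowAvg f b n') _ ▸ hclose n' hn' b)
    _ = ε := add_halves ε

lemma exists_tendstoUniformly [CompleteSpace E] (hf : IsBohrAlmostPeriodic f) :
    ∃ μ, TendstoUniformly (fun n a => windowAvg f a n) (fun _ => μ) atTop := by
  have hcauchy : CauchySeq (windowAvg f 0) := Metric.cauchySeq_iff'.2 fun ε hε => by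
    obtain ⟨N, hN⟩ := hf.exists_forall_norm_windowAvg_sub_le (half_pos hε)
    exact ⟨N, fun n hn =>
      (dist_eq_norm _ _).trans_lt ((hN n hn N le_rfl 0 0).trans_lt (half_lt_self hε))⟩
  obtain ⟨μ, hμ⟩ := cauchySeq_tendsto_of_complete hcauchy
  refine ⟨μ, Metric.tendstoUniformly_iff.2 fun ε hε => ?_⟩
  obtain ⟨N, hN⟩ := hf.exists_forall_norm_windowAvg_sub_le (half_pos hε)
  filter_upwards [eventually_ge_atTop N] with n hn a
  have : dist (windowAvg f a n) μ ≤ ε / 2 :=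
    le_of_tendsto (tendsto_const_nhds.dist hμ) (eventually_atTop.2 ⟨N, fun k hk =>
      (dist_eq_norm _ _).trans_le (hN n hn k hk a 0)⟩)
  rw [dist_comm]
  linarith

end IsBohrAlmostPeriodic

end Average

lemma AlmostPeriodicSeq.isBohrAlmostPeriodic {f : ℤ → ℂ} (hf : AlmostPeriodicSeq f) :
    IsBohrAlmostPeriodic f := by
  intro ε hε
  obtain ⟨t, hts, htfin, hcover⟩ := totallyBounded_iff_subset.1
    (hf.totallyBounded.subset subset_closure) _
    ((UniformFun.hasBasis_uniformity ℤ ℂ).mem_of_mem (Metric.dist_mem_uniformity hε))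
  choose! k hk using fun y (hy : y ∈ t) => hts hy
  set K := htfin.toFinset.sup fun y => (k y).natAbs
  refine ⟨2 * K, fun a => ?_⟩
  -- the translate by `a - K` is `ε`-close to a translate by `k y` with `|k y| ≤ K`
  obtain ⟨y, hy, hclose⟩ := Set.mem_iUnion₂.1 (hcover ⟨a - K, rfl⟩)
  have hky : (k y).natAbs ≤ K := le_sup (f := fun y => (k y).natAbs) (htfin.mem_toFinset.2 hy)
  refine ⟨a - K - k y, by omega, by omega, fun n => ?_⟩
  rw [hk y hy] at hclose
  have h := hclose (n - k y)
  simp only [Set.mem_ofPred_eq, UniformFun.toFun_ofFun, sub_add_cancel] at h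
  rw [← dist_eq_norm, show n + (a - K - k y) = n - k y + (a - K) by ring]
  exact h.le

/-- For an almost periodic sequence on ℤ, the mean value
`⟨f⟩ = lim_{N→∞} (1/(2N+1)) ∑_{k=n₀-N}^{n₀+N} f(k)` exists and is independent of `n₀`. -/
theorem stmt_1 (f : ℤ → ℂ) (hf : AlmostPeriodicSeq f) :
    ∃ μ : ℂ, ∀ n₀ : ℤ, Filter.Tendsto
      (fun N : ℕ => (2 * (N : ℂ) + 1)⁻¹ * ∑ k ∈ Finset.Icc (n₀ - (N : ℤ)) (n₀ + (N : ℤ)), f k)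
      Filter.atTop (nhds μ) := by
  obtain ⟨μ, hμ⟩ := hf.isBohrAlmostPeriodic.exists_tendstoUniformly
  refine ⟨μ, fun n₀ => ?_⟩
  have hlen : Tendsto (fun N : ℕ => 2 * N + 1) atTop atTop :=
    tendsto_atTop_atTop.2 fun b => ⟨b, fun N hN => by omega⟩
  have h := (tendstoUniformly_iff_tendsto.1 hμ).comp
    (hlen.prodMk (tendsto_top (f := fun N : ℕ => n₀ - (N : ℤ))))
  refine (Uniform.tendsto_nhds_right.2 h).congr fun N => ?_
  simp only [windowAvg, sum_Icc_eq_windowSum, Complex.real_smul]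
  rw [show (n₀ + N + 1 - (n₀ - N)).toNat = 2 * N + 1 by omega]
  push_cast
  rfl
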